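/- arXiv:2408.05486 — 5 statements merged into one kernel-verified Lean document; each statement's English description precedes it below -/
import Mathlib

section
/- Let ρ : 𝒳̃ → 𝒳 be a CC covering between featureless combinatorial complexes, and let M be a HOMP model with T layers. Denote by h^{(t)} and h̃^{(t)} the cell feature maps computed by M on 𝒳 and on 𝒳̃ at layer t. Then h̃^{(t)}_{x'} = h^{(t)}_{ρ(x')} for every t = 0, …, T and every cell x' of 𝒳̃. -/
/-! Basic framework: combinatorial complexes, natural neighborhood functions,
CC coverings, Hasse graphs, and higher-order message-passing (HOMP) models. -/

namespace TDL

/-- The raw data of a combinatorial complex over an ambient node type `S`: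
a set of cells (finite, nonempty subsets of nodes) and a rank function. -/
structure PreCC (S : Type*) where
  cells : Set (Finset S)
  rk : Finset S → ℕ

/-- A (featureless) combinatorial complex.  The node set is implicitly the set of
elements appearing in cells; every singleton of such a node is a cell of rank `0`,
cells are nonempty, there are finitely many cells, and the rank function is
monotone with respect to inclusion. -/
structure CC (S : Type*) extends PreCC S where
  cells_finite : cells.Finite
  nonempty_of_mem : ∀ x ∈ cells, x.Nonempty
  singleton_mem : ∀ x ∈ cells, ∀ s ∈ x, ({s} : Finset S) ∈ cells
  rk_singleton : ∀ s : S, ({s} : Finset S) ∈ cells → rk {s} = 0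
  rk_mono : ∀ x ∈ cells, ∀ y ∈ cells, x ⊆ y → rk x ≤ rk y

/-- Names of the natural neighborhood functions: `(r₁,r₂)`-adjacency,
coadjacency, incidence and co-incidence. -/
inductive NbhdKind : Type
  | adj (r₁ r₂ : ℕ)
  | coadj (r₁ r₂ : ℕ)
  | inc (r₁ r₂ : ℕ)
  | coinc (r₁ r₂ : ℕ)
  deriving DecidableEq

/-- The two ranks mentioned by a neighborhood kind are bounded by `ℓ`. -/
def NbhdKind.bounded (ℓ : ℕ) : NbhdKind → Prop
  | .adj r₁ r₂ => r₁ ≤ ℓ ∧ r₂ ≤ ℓ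
  | .coadj r₁ r₂ => r₁ ≤ ℓ ∧ r₂ ≤ ℓ
  | .inc r₁ r₂ => r₁ ≤ ℓ ∧ r₂ ≤ ℓ
  | .coinc r₁ r₂ => r₁ ≤ ℓ ∧ r₂ ≤ ℓ

namespace PreCC

variable {S : Type*}

/-- The `r`-skeleton: the set of cells of rank `r`. -/
def skel (X : PreCC S) (r : ℕ) : Set (Finset S) := {x | x ∈ X.cells ∧ X.rk x = r}

/-- The natural neighborhood functions of a complex. -/
def nbhd (X : PreCC S) : NbhdKind → Finset S → Set (Finset S)
  | .adj r₁ r₂, x => {y | x ∈ X.skel r₁ ∧ y ∈ X.skel r₁ ∧ ∃ z ∈ X.skel r₂, x ⊆ z ∧ y ⊆ z}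
  | .coadj r₁ r₂, x => {y | x ∈ X.skel r₁ ∧ y ∈ X.skel r₁ ∧ ∃ z ∈ X.skel r₂, z ⊆ x ∧ z ⊆ y}
  | .inc r₁ r₂, x => {y | x ∈ X.skel r₁ ∧ y ∈ X.skel r₂ ∧ x ⊆ y}
  | .coinc r₁ r₂, x => {y | x ∈ X.skel r₁ ∧ y ∈ X.skel r₂ ∧ y ⊆ x}

/-- The Hasse graph of a complex: vertices are cells, and `x, y` are joined by an
edge whenever `x ⊆ y` and `rk x = rk y - 1` (or symmetrically). -/
def hasse (X : PreCC S) : SimpleGraph {x : Finset S // x ∈ X.cells} where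
  Adj a b := (a.1 ⊆ b.1 ∧ X.rk a.1 + 1 = X.rk b.1) ∨ (b.1 ⊆ a.1 ∧ X.rk b.1 + 1 = X.rk a.1)
  symm := by
    constructor
    rintro a b (h | h)
    · exact Or.inr h
    · exact Or.inl h
  loopless := by constructor; rintro a (⟨-, h⟩ | ⟨-, h⟩) <;> omega

end PreCC

/-- `ρ` is a CC covering of `X` by `Xt`: it maps cells of `Xt` to cells of `X`
surjectively, preserves ranks, and is a local isomorphism with respect to every
natural neighborhood function. -/
structure IsCovering {S' S : Type*} (Xt : PreCC S') (X : PreCC S)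
    (ρ : Finset S' → Finset S) : Prop where
  mem : ∀ x' ∈ Xt.cells, ρ x' ∈ X.cells
  surj : ∀ x ∈ X.cells, ∃ x' ∈ Xt.cells, ρ x' = x
  rank : ∀ x' ∈ Xt.cells, X.rk (ρ x') = Xt.rk x'
  locBij : ∀ x' ∈ Xt.cells, ∀ N : NbhdKind, Set.BijOn ρ (Xt.nbhd N x') (X.nbhd N (ρ x'))

open Classical in
/-- The multiset underlying a finite set (junk value `0` for infinite sets). -/
noncomputable def setMultiset {α : Type*} (s : Set α) : Multiset α :=
  if h : s.Finite then h.toFinset.val else 0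

/-- A higher-order message-passing (HOMP) model over a feature space `D`, for
featureless complexes of dimension at most `ℓ`: a number of layers `T`, an initial
constant feature, and, per layer, message functions (per neighborhood function and
rank), permutation-invariant aggregations (functions of multisets), a combination
operator over the family of neighborhood functions with ranks at most `ℓ`,
activations, and a readout defined on multisets. -/
structure HOMP (D : Type*) (ℓ : ℕ) where
  T : ℕ
  init : D
  msg : ℕ → NbhdKind → ℕ → D → D → D
  agg : ℕ → NbhdKind → Multiset D → D
  comb : ℕ → ({N : NbhdKind // N.bounded ℓ} → D) → D
  act : ℕ → D → D
  readout : Multiset D → D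

namespace HOMP

variable {D : Type*} {ℓ : ℕ} {S : Type*}

/-- The cell feature maps computed by a HOMP model on a complex:
`h⁰_x` is the initial constant, and
`h^{t+1}_x = β_t (⊗_N (⊕ {{ m_{t,N,rk x}(h^t_x, h^t_y) : y ∈ N(x) }}))`. -/
noncomputable def feat (M : HOMP D ℓ) (X : PreCC S) : ℕ → Finset S → D
  | 0, _ => M.init
  | t + 1, x =>
      M.act t <| M.comb t fun N =>
        M.agg t N.1 <|
          (setMultiset (X.nbhd N.1 x)).map fun y =>
            M.msg t N.1 (X.rk x) (M.feat X t x) (M.feat X t y)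

/-- The output of a HOMP model: the readout of the multiset of final features. -/
noncomputable def out (M : HOMP D ℓ) (X : PreCC S) : D :=
  M.readout <| (setMultiset X.cells).map fun x => M.feat X M.T x

end HOMP

end TDL

/-! A covering is a local isomorphism for every neighborhood function, so the multiset of
messages a cell `x'` receives is the image of the one received by `ρ x'`; by induction on the
layer, every message is computed from equal features, hence the features agree. -/

namespace TDL

section setMultiset

variable {α β : Type*}

lemma mem_of_mem_setMultiset {s : Set α} {a : α} (h : a ∈ setMultiset s) : a ∈ s := by
  classical
  unfold setMultiset at h
  split_ifs at h with hs
  · exact hs.mem_toFinset.1 h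
  · simp at h

lemma _root_.Set.BijOn.map_setMultiset {f : α → β} {s : Set α} {t : Set β}
    (hb : Set.BijOn f s t) :
    (setMultiset s).map f = setMultiset t := by
  classical
  by_cases hs : s.Finite
  · have ht : t.Finite := hb.image_eq ▸ hs.image f
    rw [setMultiset, setMultiset, dif_pos hs, dif_pos ht,
      ← Finset.image_val_of_injOn (by simpa using hb.injOn)]
    congr 1
    rw [← Set.Finite.toFinset_image f hs (hb.image_eq ▸ ht)]
    simp only [hb.image_eq]
  · have ht : ¬ t.Finite := fun ht => hs (.of_finite_image (hb.image_eq ▸ ht) hb.injOn)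
    simp [setMultiset, hs, ht]

end setMultiset

lemma PreCC.nbhd_subset_cells {S : Type*} (X : PreCC S) (N : NbhdKind) (x : Finset S) :
    X.nbhd N x ⊆ X.cells := by
  cases N <;> exact fun y hy => hy.2.1.1

lemma HOMP.feat_succ_eq_of_isCovering {D S' S : Type*} {ℓ : ℕ} {Xt : PreCC S'} {X : PreCC S}
    {ρ : Finset S' → Finset S} (hρ : IsCovering Xt X ρ) (M : HOMP D ℓ) {t : ℕ}
    (ih : ∀ y ∈ Xt.cells, M.feat Xt t y = M.feat X t (ρ y)) {x' : Finset S'}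
    (hx' : x' ∈ Xt.cells) :
    M.feat Xt (t + 1) x' = M.feat X (t + 1) (ρ x') := by
  simp only [HOMP.feat]
  congr 2
  funext N
  rw [← (hρ.locBij x' hx' N.1).map_setMultiset, Multiset.map_map]
  refine congrArg _ (Multiset.map_congr rfl fun y hy => ?_)
  have hy : y ∈ Xt.cells := Xt.nbhd_subset_cells _ _ (mem_of_mem_setMultiset hy)
  simp only [Function.comp_apply, hρ.rank x' hx', ih x' hx', ih y hy]

theorem covering_feat_eq_general
    {S' S : Type} (Xt : CC S') (X : CC S) (ρ : Finset S' → Finset S)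
    (hρ : IsCovering Xt.toPreCC X.toPreCC ρ)
    {D : Type} {ℓ : ℕ} (M : HOMP D ℓ)
    (t : ℕ) (x' : Finset S') (hx' : x' ∈ Xt.cells) :
    M.feat Xt.toPreCC t x' = M.feat X.toPreCC t (ρ x') := by
  induction t generalizing x' with
  | zero => rfl
  | succ t ih => exact M.feat_succ_eq_of_isCovering hρ ih hx'

/-- If `ρ : Xt → X` is a CC covering between featureless combinatorial complexes
and `M` is a HOMP model with `T` layers, then the feature computed by `M` on `Xt`
at any cell `x'` agrees with the feature computed by `M` on `X` at `ρ x'`, at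
every layer `t = 0, …, T`. -/
theorem covering_feat_eq
    {S' S : Type} (Xt : CC S') (X : CC S) (ρ : Finset S' → Finset S)
    (hρ : IsCovering Xt.toPreCC X.toPreCC ρ)
    {D : Type} {ℓ : ℕ} (M : HOMP D ℓ)
    (t : ℕ) (ht : t ≤ M.T) (x' : Finset S') (hx' : x' ∈ Xt.cells) :
    M.feat Xt.toPreCC t x' = M.feat X.toPreCC t (ρ x') :=
  covering_feat_eq_general Xt X ρ hρ M t x' hx'

end TDL
end

section
/- If ρ : 𝒳̃ → 𝒳 is a CC covering, then for every natural neighborhood function 𝒩 and every cell x of 𝒳, the family of sets {𝒩(x') : x' ∈ ρ⁻¹(x)} is pairwise disjoint, i.e. 𝒩(x'₁) ∩ 𝒩(x'₂) = ∅ for any two distinct cells x'₁, x'₂ in the fiber ρ⁻¹(x). -/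
/-! A common neighbour `y` of `x'₁` and `x'₂` has both of them in its dual neighbourhood
(adjacency and coadjacency are symmetric, incidence and co-incidence are transposes of each
other). The covering is injective on that neighbourhood, so `ρ x'₁ = ρ x'₂` forces `x'₁ = x'₂`. -/

namespace TDL

def NbhdKind.dual : NbhdKind → NbhdKind
  | .adj r₁ r₂ => .adj r₁ r₂
  | .coadj r₁ r₂ => .coadj r₁ r₂
  | .inc r₁ r₂ => .coinc r₂ r₁
  | .coinc r₁ r₂ => .inc r₂ r₁

namespace PreCC

variable {S : Type*} (X : PreCC S)

theorem mem_nbhd_dual_iff (N : NbhdKind) (x y : Finset S) :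
    x ∈ X.nbhd N.dual y ↔ y ∈ X.nbhd N x := by
  cases N <;> simp only [nbhd, NbhdKind.dual, Set.mem_ofPred_eq] <;> tauto

theorem mem_cells_of_mem_nbhd {N : NbhdKind} {x y : Finset S} (h : y ∈ X.nbhd N x) :
    y ∈ X.cells := by
  cases N <;> exact h.2.1.1

end PreCC

theorem IsCovering.eq_of_mem_nbhd_of_map_eq {S' S : Type*} {Xt : PreCC S'} {X : PreCC S}
    {ρ : Finset S' → Finset S} (hρ : IsCovering Xt X ρ) {N : NbhdKind} {x'₁ x'₂ y : Finset S'}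
    (hy₁ : y ∈ Xt.nbhd N x'₁) (hy₂ : y ∈ Xt.nbhd N x'₂) (hρx : ρ x'₁ = ρ x'₂) : x'₁ = x'₂ :=
  (hρ.locBij y (Xt.mem_cells_of_mem_nbhd hy₁) N.dual).injOn
    ((Xt.mem_nbhd_dual_iff N _ _).2 hy₁) ((Xt.mem_nbhd_dual_iff N _ _).2 hy₂) hρx

theorem covering_fiber_nbhd_disjoint_general
    {S' S : Type} (Xt : CC S') (X : CC S) (ρ : Finset S' → Finset S)
    (hρ : IsCovering Xt.toPreCC X.toPreCC ρ)
    (N : NbhdKind) (x : Finset S)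
    (x'₁ x'₂ : Finset S')
    (hρ₁ : ρ x'₁ = x) (hρ₂ : ρ x'₂ = x) (hne : x'₁ ≠ x'₂) :
    Xt.toPreCC.nbhd N x'₁ ∩ Xt.toPreCC.nbhd N x'₂ = ∅ :=
  Set.eq_empty_iff_forall_notMem.2 fun _ ⟨hy₁, hy₂⟩ ↦
    hne (hρ.eq_of_mem_nbhd_of_map_eq hy₁ hy₂ (hρ₁.trans hρ₂.symm))

/-- If `ρ : Xt → X` is a CC covering then, for every natural neighborhood
function `N` and every cell `x` of `X`, the neighborhoods of distinct cells in
the fiber `ρ⁻¹(x)` are pairwise disjoint. -/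
theorem covering_fiber_nbhd_disjoint
    {S' S : Type} (Xt : CC S') (X : CC S) (ρ : Finset S' → Finset S)
    (hρ : IsCovering Xt.toPreCC X.toPreCC ρ)
    (N : NbhdKind) (x : Finset S) (hx : x ∈ X.cells)
    (x'₁ x'₂ : Finset S') (h₁ : x'₁ ∈ Xt.cells) (h₂ : x'₂ ∈ Xt.cells)
    (hρ₁ : ρ x'₁ = x) (hρ₂ : ρ x'₂ = x) (hne : x'₁ ≠ x'₂) :
    Xt.toPreCC.nbhd N x'₁ ∩ Xt.toPreCC.nbhd N x'₂ = ∅ :=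
  covering_fiber_nbhd_disjoint_general Xt X ρ hρ N x x'₁ x'₂ hρ₁ hρ₂ hne

end TDL
end

section
/- For integers h, p ≥ 3, the map on cells induced by the node map ρ_cyl^{h,p} restricted to the nodes [h] × [2p] of the cylinder CC Cyl_{h,2p} is a CC covering of Cyl_{h,p} by Cyl_{h,2p}. -/
namespace TDL

/-- The residue of `n` modulo `p` taken in `{1, …, p}`. -/
def residue (p n : ℕ) : ℕ := (n - 1) % p + 1

/-- The node map `ρ_cyl^{h,p}(s₁, s₂) = (s₁, s₂ mod p)`, residues in `{1,…,p}`. -/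
def rhoCyl (p : ℕ) (s : ℕ × ℕ) : ℕ × ℕ := (s.1, residue p s.2)

/-- The node map `ρ_möb^{h,p}`: `(s₁, s₂ mod p)` if `s₂ mod 2p ≤ p`, and
`(h + 1 − s₁, s₂ mod p)` otherwise, residues taken in `{1,…,p}` and `{1,…,2p}`. -/
def rhoMob (h p : ℕ) (s : ℕ × ℕ) : ℕ × ℕ :=
  if residue (2 * p) s.2 ≤ p then (s.1, residue p s.2) else (h + 1 - s.1, residue p s.2)

/-- The node set `[h] × [p]`. -/
def gridNodes (h p : ℕ) : Set (ℕ × ℕ) :=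
  {s | 1 ≤ s.1 ∧ s.1 ≤ h ∧ 1 ≤ s.2 ∧ s.2 ≤ p}

/-- Coordinatewise addition of `k ∈ {0,1}²` to a node. -/
def addK (s : ℕ × ℕ) (k : Bool × Bool) : ℕ × ℕ :=
  (s.1 + (if k.1 then 1 else 0), s.2 + (if k.2 then 1 else 0))

/-- The cell `s_k = { ρ(s + k') : k' ∈ {0,1}², k' ≤ k }`. -/
def stripCell (ρ : ℕ × ℕ → ℕ × ℕ) (s : ℕ × ℕ) (k : Bool × Bool) : Finset (ℕ × ℕ) :=
  (Finset.univ.filter fun k' : Bool × Bool => k'.1 ≤ k.1 ∧ k'.2 ≤ k.2).image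
    fun k' => ρ (addK s k')

/-- The rank `k₁ + k₂` of the cell `s_k`. -/
def stripRank (k : Bool × Bool) : ℕ :=
  (if k.1 then 1 else 0) + (if k.2 then 1 else 0)

/-- The complex with node set `[h] × [p]` glued via the node map `ρ`: for
`r ∈ {0,1,2}` its `r`-cells are the sets `s_k` with `s ∈ [h] × [p]`,
`k ∈ {0,1}²`, `k₁ + k₂ = r` and `ρ(s + k) ∈ [h] × [p]`. -/
noncomputable def stripPre (h p : ℕ) (ρ : ℕ × ℕ → ℕ × ℕ) : PreCC (ℕ × ℕ) where
  cells := {x | ∃ s ∈ gridNodes h p, ∃ k : Bool × Bool,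
    ρ (addK s k) ∈ gridNodes h p ∧ x = stripCell ρ s k}
  rk x := sInf {r | ∃ s ∈ gridNodes h p, ∃ k : Bool × Bool,
    ρ (addK s k) ∈ gridNodes h p ∧ x = stripCell ρ s k ∧ r = stripRank k}

/-- The cylinder combinatorial complex `Cyl_{h,p}`. -/
noncomputable def cylPre (h p : ℕ) : PreCC (ℕ × ℕ) := stripPre h p (rhoCyl p)

/-- The Möbius strip combinatorial complex `Möb_{h,p}`. -/
noncomputable def mobPre (h p : ℕ) : PreCC (ℕ × ℕ) := stripPre h p (rhoMob h p)

end TDL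

/-! A cell of `Cyl_{h,q}` is a product `[a, a + k₁] × A`, where `A` is the cyclic arc of `k₂ + 1`
consecutive residues mod `q` starting at `b`; reducing mod `p ∣ q` only reads `b` mod `p`.
A surjective, rank-preserving, monotone map of cells is a covering as soon as every inclusion
`ρ x' ⊆ y` or `y ⊆ ρ x'` lifts to an inclusion at `x'`, and `ρ` is injective on the cells sharing
an upper or a lower cell with `x'`. Lifting works because the start of an arc may be moved freely
within its class mod `p`. For injectivity, the arcs of the cells near `x'` start within distance
one of a point of the arc of `x'`, so two such starts differ mod `q` by some `d` with `|d| ≤ 2`;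
if they agree mod `p`, then `p ∣ d`, and `d = 0` because `p ≥ 3`. -/

namespace TDL

namespace PreCC

variable {S S' : Type*}

def near (X : PreCC S) (x : Finset S) : Set (Finset S) :=
  {y | y ∈ X.cells ∧ ∃ z ∈ X.cells, (x ⊆ z ∧ y ⊆ z) ∨ (z ⊆ x ∧ z ⊆ y)}

lemma nbhd_subset_near (X : PreCC S) (N : NbhdKind) (x : Finset S) : X.nbhd N x ⊆ X.near x := by
  cases N with
  | adj => rintro y ⟨-, hy, z, hz, hxz, hyz⟩; exact ⟨hy.1, z, hz.1, .inl ⟨hxz, hyz⟩⟩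
  | coadj => rintro y ⟨-, hy, z, hz, hzx, hzy⟩; exact ⟨hy.1, z, hz.1, .inr ⟨hzx, hzy⟩⟩
  | inc => rintro y ⟨-, hy, hxy⟩; exact ⟨hy.1, y, hy.1, .inl ⟨hxy, subset_rfl⟩⟩
  | coinc => rintro y ⟨-, hy, hyx⟩; exact ⟨hy.1, y, hy.1, .inr ⟨hyx, subset_rfl⟩⟩

variable {Xt : PreCC S'} {X : PreCC S} {ρ : Finset S' → Finset S}

lemma mapsTo_nbhd (mono : Monotone ρ) (mem : ∀ x' ∈ Xt.cells, ρ x' ∈ X.cells)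
    (rank : ∀ x' ∈ Xt.cells, X.rk (ρ x') = Xt.rk x') (N : NbhdKind) (x' : Finset S') :
    Set.MapsTo ρ (Xt.nbhd N x') (X.nbhd N (ρ x')) := by
  have skel {r y'} (hy' : y' ∈ Xt.skel r) : ρ y' ∈ X.skel r :=
    ⟨mem y' hy'.1, (rank y' hy'.1).trans hy'.2⟩
  cases N with
  | adj =>
    rintro y ⟨hx, hy, z, hz, hxz, hyz⟩
    exact ⟨skel hx, skel hy, ρ z, skel hz, mono hxz, mono hyz⟩
  | coadj =>
    rintro y ⟨hx, hy, z, hz, hzx, hzy⟩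
    exact ⟨skel hx, skel hy, ρ z, skel hz, mono hzx, mono hzy⟩
  | inc => rintro y ⟨hx, hy, hxy⟩; exact ⟨skel hx, skel hy, mono hxy⟩
  | coinc => rintro y ⟨hx, hy, hyx⟩; exact ⟨skel hx, skel hy, mono hyx⟩

lemma surjOn_nbhd (rank : ∀ x' ∈ Xt.cells, X.rk (ρ x') = Xt.rk x')
    (lift_sup : ∀ x' ∈ Xt.cells, ∀ y ∈ X.cells, ρ x' ⊆ y → ∃ y' ∈ Xt.cells, x' ⊆ y' ∧ ρ y' = y)
    (lift_sub : ∀ x' ∈ Xt.cells, ∀ y ∈ X.cells, y ⊆ ρ x' → ∃ y' ∈ Xt.cells, y' ⊆ x' ∧ ρ y' = y)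
    (N : NbhdKind) {x' : Finset S'} (hx' : x' ∈ Xt.cells) :
    Set.SurjOn ρ (Xt.nbhd N x') (X.nbhd N (ρ x')) := by
  have skel {r y'} (hy' : y' ∈ Xt.cells) (hy : ρ y' ∈ X.skel r) : y' ∈ Xt.skel r :=
    ⟨hy', (rank y' hy').symm.trans hy.2⟩
  cases N with
  | adj =>
    rintro y ⟨hx, hy, z, hz, hxz, hyz⟩
    obtain ⟨z', hz', hxz', rfl⟩ := lift_sup x' hx' z hz.1 hxz
    obtain ⟨y', hy', hyz', rfl⟩ := lift_sub z' hz' y hy.1 hyz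
    exact ⟨y', ⟨skel hx' hx, skel hy' hy, z', skel hz' hz, hxz', hyz'⟩, rfl⟩
  | coadj =>
    rintro y ⟨hx, hy, z, hz, hzx, hzy⟩
    obtain ⟨z', hz', hzx', rfl⟩ := lift_sub x' hx' z hz.1 hzx
    obtain ⟨y', hy', hzy', rfl⟩ := lift_sup z' hz' y hy.1 hzy
    exact ⟨y', ⟨skel hx' hx, skel hy' hy, z', skel hz' hz, hzx', hzy'⟩, rfl⟩
  | inc =>
    rintro y ⟨hx, hy, hxy⟩
    obtain ⟨y', hy', hxy', rfl⟩ := lift_sup x' hx' y hy.1 hxy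
    exact ⟨y', ⟨skel hx' hx, skel hy' hy, hxy'⟩, rfl⟩
  | coinc =>
    rintro y ⟨hx, hy, hyx⟩
    obtain ⟨y', hy', hyx', rfl⟩ := lift_sub x' hx' y hy.1 hyx
    exact ⟨y', ⟨skel hx' hx, skel hy' hy, hyx'⟩, rfl⟩

end PreCC

open PreCC in
theorem IsCovering.of_lift {S S' : Type*} {Xt : PreCC S'} {X : PreCC S}
    {ρ : Finset S' → Finset S} (mono : Monotone ρ)
    (mem : ∀ x' ∈ Xt.cells, ρ x' ∈ X.cells) (surj : ∀ x ∈ X.cells, ∃ x' ∈ Xt.cells, ρ x' = x)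
    (rank : ∀ x' ∈ Xt.cells, X.rk (ρ x') = Xt.rk x')
    (lift_sup : ∀ x' ∈ Xt.cells, ∀ y ∈ X.cells, ρ x' ⊆ y → ∃ y' ∈ Xt.cells, x' ⊆ y' ∧ ρ y' = y)
    (lift_sub : ∀ x' ∈ Xt.cells, ∀ y ∈ X.cells, y ⊆ ρ x' → ∃ y' ∈ Xt.cells, y' ⊆ x' ∧ ρ y' = y)
    (injOn : ∀ x' ∈ Xt.cells, Set.InjOn ρ (Xt.near x')) :
    IsCovering Xt X ρ :=
  ⟨mem, surj, rank, fun x' hx' N => ⟨mapsTo_nbhd mono mem rank N x',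
    (injOn x' hx').mono (Xt.nbhd_subset_near N x'), surjOn_nbhd rank lift_sup lift_sub N hx'⟩⟩

lemma stripPre_rk_eq {h p r : ℕ} {ρ : ℕ × ℕ → ℕ × ℕ} {x : Finset (ℕ × ℕ)}
    (hx : x ∈ (stripPre h p ρ).cells)
    (hr : ∀ s ∈ gridNodes h p, ∀ k, x = stripCell ρ s k → stripRank k = r) :
    (stripPre h p ρ).rk x = r := by
  have hset : {r' | ∃ s ∈ gridNodes h p, ∃ k : Bool × Bool, ρ (addK s k) ∈ gridNodes h p ∧
      x = stripCell ρ s k ∧ r' = stripRank k} = {r} := by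
    ext r'
    refine ⟨?_, ?_⟩
    · rintro ⟨s, hs, k, -, hx, rfl⟩
      exact hr s hs k hx
    · rintro rfl
      obtain ⟨s, hs, k, hk, hx⟩ := hx
      exact ⟨s, hs, k, hk, hx, (hr s hs k hx).symm⟩
  show sInf _ = r
  rw [hset, csInf_singleton]

section Residue

variable {q n m : ℕ}

lemma one_le_residue (q n : ℕ) : 1 ≤ residue q n := by
  unfold residue; omega

lemma residue_le (hq : 0 < q) (n : ℕ) : residue q n ≤ q := by
  have := Nat.mod_lt (n - 1) hq
  unfold residue; omega

lemma residue_residue_of_dvd {p : ℕ} (h : p ∣ q) (n : ℕ) :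
    residue p (residue q n) = residue p n := by
  simp only [residue, Nat.add_sub_cancel, Nat.mod_mod_of_dvd _ h]

lemma residue_modEq (hn : 1 ≤ n) : residue q n ≡ n [MOD q] := by
  have : (n - 1) % q ≡ n - 1 [MOD q] := Nat.mod_modEq _ _
  simpa [residue, Nat.sub_add_cancel hn] using this.add_right 1

lemma residue_eq_residue_iff (hm : 1 ≤ m) (hn : 1 ≤ n) :
    residue q m = residue q n ↔ m ≡ n [MOD q] := by
  refine ⟨fun h => (residue_modEq hm).symm.trans (h ▸ residue_modEq hn), fun h => ?_⟩
  have : m - 1 ≡ n - 1 [MOD q] :=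
    Nat.ModEq.add_right_cancel' 1 (by rwa [Nat.sub_add_cancel hm, Nat.sub_add_cancel hn])
  exact congrArg (· + 1) this

end Residue

lemma eq_of_add_modEq_add {q m d₁ d₂ : ℕ} (h : m + d₁ ≡ m + d₂ [MOD q]) (h₁ : d₁ < q)
    (h₂ : d₂ < q) : d₁ = d₂ :=
  (Nat.ModEq.add_left_cancel' m h).eq_of_lt_of_lt h₁ h₂

lemma modEq_of_modEq_of_near {p q b b₁ b₂ u₁ v₁ u₂ v₂ : ℕ} (hp : 3 ≤ p) (hpq : p ∣ q)
    (hu₁ : u₁ ≤ 1) (hv₁ : v₁ ≤ 1) (hu₂ : u₂ ≤ 1) (hv₂ : v₂ ≤ 1)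
    (h₁ : b₁ + u₁ ≡ b + v₁ [MOD q]) (h₂ : b₂ + u₂ ≡ b + v₂ [MOD q]) (h : b₁ ≡ b₂ [MOD p]) :
    b₁ ≡ b₂ [MOD q] := by
  have e₁ : b₁ + (u₁ + u₂) ≡ b + (v₁ + u₂) [MOD q] := by
    simpa only [add_assoc] using h₁.add_right u₂
  have e₂ : b₂ + (u₁ + u₂) ≡ b + (v₂ + u₁) [MOD q] := by
    rw [add_comm u₁, ← add_assoc, ← add_assoc]
    exact h₂.add_right u₁
  have hv : v₁ + u₂ = v₂ + u₁ := eq_of_add_modEq_add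
    (((e₁.of_dvd hpq).symm.trans (h.add_right _)).trans (e₂.of_dvd hpq)) (by omega) (by omega)
  exact Nat.ModEq.add_right_cancel' _ (e₁.trans (hv ▸ e₂.symm))

def cycArc (q b : ℕ) : Bool → Finset ℕ
  | false => {residue q b}
  | true => {residue q b, residue q (b + 1)}

def cylCell (q a b : ℕ) (k : Bool × Bool) : Finset (ℕ × ℕ) := stripCell (rhoCyl q) (a, b) k

lemma cylCell_eq_product (q a b : ℕ) (k : Bool × Bool) :
    cylCell q a b k = Finset.Icc a (a + k.1.toNat) ×ˢ cycArc q b k.2 := by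
  rcases k with ⟨_ | _, _ | _⟩ <;> ext ⟨u, v⟩ <;>
    simp [cylCell, stripCell, cycArc, addK, rhoCyl, Prod.ext_iff, Bool.le_iff_imp] <;> omega

lemma cycArc_subset_cycArc_iff {q b b' : ℕ} (hq : 3 ≤ q) (hb : 1 ≤ b) (hb' : 1 ≤ b')
    (j j' : Bool) : cycArc q b j ⊆ cycArc q b' j' ↔
      ∃ j₀, j₀ + j.toNat ≤ j'.toNat ∧ b ≡ b' + j₀ [MOD q] := by
  have hne : ∀ {d}, 0 < d → d < q → ¬b ≡ b + d [MOD q] := fun hd hdq h =>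
    (eq_of_add_modEq_add (d₁ := 0) h (by omega) hdq ▸ hd).false
  cases j <;> cases j' <;>
    simp only [cycArc, Finset.insert_subset_iff, Finset.singleton_subset_iff, Finset.mem_insert,
      Finset.mem_singleton, residue_eq_residue_iff, hb, hb', le_add_iff_nonneg_left, zero_le,
      Bool.toNat_true, Bool.toNat_false, add_zero, nonpos_iff_eq_zero, exists_eq_left,
      add_le_iff_nonpos_left, Nat.add_eq_zero_iff, one_ne_zero, and_false, false_and, exists_const,
      iff_false, not_and]
  · constructor
    · rintro (h | h)
      exacts [⟨0, zero_le_one, h⟩, ⟨1, le_rfl, h⟩]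
    · rintro ⟨j₀, hj, h⟩
      interval_cases j₀ <;> simp_all
  · exact fun h₀ h₁ => hne one_pos (by omega) (h₀.trans h₁.symm)
  · refine ⟨?_, fun h => ⟨Or.inl h, Or.inr (h.add_right 1)⟩⟩
    rintro ⟨h₀ | h₀, h₁ | h₁⟩
    · exact h₀
    · exact h₀
    · exact (hne two_pos (by omega) (h₀.trans (h₁.add_right 1).symm)).elim
    · exact Nat.ModEq.add_right_cancel' 1 h₁

lemma cylCell_subset_cylCell_iff {q a b a' b' : ℕ} {k k' : Bool × Bool} (hq : 3 ≤ q)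
    (hb : 1 ≤ b) (hb' : 1 ≤ b') : cylCell q a b k ⊆ cylCell q a' b' k' ↔
      (a' ≤ a ∧ a + k.1.toNat ≤ a' + k'.1.toNat) ∧
        ∃ j₀, j₀ + k.2.toNat ≤ k'.2.toNat ∧ b ≡ b' + j₀ [MOD q] := by
  have hne : (Finset.Icc a (a + k.1.toNat) ×ˢ cycArc q b k.2 : Set (ℕ × ℕ)).Nonempty := by
    cases k.2 <;> simp [cycArc]
  rw [cylCell_eq_product, cylCell_eq_product, ← Finset.coe_subset, Finset.coe_product,
    Finset.coe_product, Set.prod_subset_prod_iff' hne, Finset.coe_subset, Finset.coe_subset,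
    Finset.Icc_subset_Icc_iff (by omega), cycArc_subset_cycArc_iff hq hb hb']

lemma cylCell_congr {q a b b' : ℕ} {k : Bool × Bool} (hb : 1 ≤ b) (hb' : 1 ≤ b')
    (h : b ≡ b' [MOD q]) : cylCell q a b k = cylCell q a b' k := by
  have h₀ : residue q b = residue q b' := (residue_eq_residue_iff hb hb').2 h
  have h₁ : residue q (b + 1) = residue q (b' + 1) :=
    (residue_eq_residue_iff (by omega) (by omega)).2 (h.add_right 1)
  rw [cylCell_eq_product, cylCell_eq_product]
  cases k.2 <;> simp only [cycArc, h₀, h₁]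

lemma cylCell_eq_cylCell_iff {q a b a' b' : ℕ} {k k' : Bool × Bool} (hq : 3 ≤ q)
    (hb : 1 ≤ b) (hb' : 1 ≤ b') :
    cylCell q a b k = cylCell q a' b' k' ↔ a = a' ∧ k = k' ∧ b ≡ b' [MOD q] := by
  refine ⟨fun h => ?_, ?_⟩
  · obtain ⟨⟨ha, hk₁⟩, j₀, hj₀, h₀⟩ := (cylCell_subset_cylCell_iff hq hb hb').1 h.le
    obtain ⟨⟨ha', hk₁'⟩, j₁, hj₁, -⟩ := (cylCell_subset_cylCell_iff hq hb' hb).1 h.ge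
    have hj : j₀ = 0 := by omega
    subst hj
    have toNat_antisymm : ∀ {x y : Bool}, x.toNat ≤ y.toNat → y.toNat ≤ x.toNat → x = y := by
      decide
    exact ⟨by omega, Prod.ext (toNat_antisymm (by omega) (by omega))
      (toNat_antisymm (by omega) (by omega)), h₀⟩
  · rintro ⟨rfl, rfl, h⟩
    exact cylCell_congr hb hb' h

lemma card_cylCell {q b : ℕ} (hq : 2 ≤ q) (hb : 1 ≤ b) (a : ℕ) (k : Bool × Bool) :
    (cylCell q a b k).card = 2 ^ stripRank k := by
  have hne : residue q b ≠ residue q (b + 1) := fun h =>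
    absurd (eq_of_add_modEq_add (d₁ := 0) ((residue_eq_residue_iff hb (by omega)).1 h)
      (by omega) (by omega)) zero_ne_one
  rw [cylCell_eq_product]
  rcases k with ⟨_ | _, _ | _⟩ <;> simp [cycArc, stripRank, hne] <;> omega

lemma rhoCyl_addK (q a b : ℕ) (k : Bool × Bool) :
    rhoCyl q (addK (a, b) k) = (a + k.1.toNat, residue q (b + k.2.toNat)) := by
  rcases k with ⟨_ | _, _ | _⟩ <;> rfl

lemma cylCell_mem_cells {h q a b : ℕ} {k : Bool × Bool} (hq : 0 < q) (ha : 1 ≤ a)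
    (hah : a + k.1.toNat ≤ h) (hb : 1 ≤ b) : cylCell q a b k ∈ (cylPre h q).cells := by
  have hk := Bool.toNat_le k.1
  refine ⟨(a, residue q b), ⟨ha, by omega, one_le_residue q b, residue_le hq b⟩, k, ?_,
    cylCell_congr hb (one_le_residue q b) (residue_modEq hb).symm⟩
  rw [rhoCyl_addK]
  exact ⟨by omega, hah, one_le_residue _ _, residue_le hq _⟩

lemma exists_cylCell_of_mem_cells {h q : ℕ} {x : Finset (ℕ × ℕ)}
    (hx : x ∈ (cylPre h q).cells) :
    ∃ a b k, 1 ≤ a ∧ a + k.1.toNat ≤ h ∧ 1 ≤ b ∧ x = cylCell q a b k := by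
  obtain ⟨⟨a, b⟩, ⟨ha, -, hb, -⟩, k, hk, rfl⟩ := hx
  rw [rhoCyl_addK] at hk
  exact ⟨a, b, k, ha, hk.2.1, hb, rfl⟩

lemma rk_cylCell {h q a b : ℕ} {k : Bool × Bool} (hq : 2 ≤ q) (ha : 1 ≤ a)
    (hah : a + k.1.toNat ≤ h) (hb : 1 ≤ b) : (cylPre h q).rk (cylCell q a b k) = stripRank k := by
  refine stripPre_rk_eq (cylCell_mem_cells (by omega) ha hah hb) fun s hs k' hs' => ?_
  have hcard := card_cylCell hq hs.2.2.1 s.1 k'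
  change (stripCell (rhoCyl q) s k').card = _ at hcard
  rw [← hs', card_cylCell hq hb] at hcard
  exact (Nat.pow_right_injective le_rfl hcard).symm

lemma image_rhoCyl_cylCell {p q : ℕ} (h : p ∣ q) (a b : ℕ) (k : Bool × Bool) :
    (cylCell q a b k).image (rhoCyl p) = cylCell p a b k := by
  simp only [cylCell, stripCell, Finset.image_image]
  refine Finset.image_congr fun k' _ => ?_
  simp only [Function.comp, rhoCyl, residue_residue_of_dvd h]

section Covering

variable {h p q : ℕ}

lemma cylPre_exists_lift_superset (hp : 3 ≤ p) (hpq : p ∣ q) (hq : 0 < q)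
    {x' y : Finset (ℕ × ℕ)} (hx' : x' ∈ (cylPre h q).cells) (hy : y ∈ (cylPre h p).cells)
    (hxy : x'.image (rhoCyl p) ⊆ y) :
    ∃ y' ∈ (cylPre h q).cells, x' ⊆ y' ∧ y'.image (rhoCyl p) = y := by
  have hq₃ : 3 ≤ q := hp.trans (Nat.le_of_dvd hq hpq)
  obtain ⟨a, b, k, -, -, hb, rfl⟩ := exists_cylCell_of_mem_cells hx'
  obtain ⟨a', c, k', ha', hah', hc, rfl⟩ := exists_cylCell_of_mem_cells hy
  rw [image_rhoCyl_cylCell hpq, cylCell_subset_cylCell_iff hp hb hc] at hxy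
  obtain ⟨hrows, j₀, hj₀, hbc⟩ := hxy
  have hj₀q : j₀ ≤ q := by have := Bool.toNat_le k'.2; omega
  -- the arc of the lift starts at `b - j₀`, written `b + q - j₀` to stay positive
  have hlift : b + q - j₀ + j₀ = b + q := Nat.sub_add_cancel (by omega)
  refine ⟨cylCell q a' (b + q - j₀) k', cylCell_mem_cells hq ha' hah' (by omega), ?_, ?_⟩
  · rw [cylCell_subset_cylCell_iff hq₃ hb (by omega)]
    refine ⟨hrows, j₀, hj₀, ?_⟩
    rw [hlift]
    exact Nat.add_modEq_right.symm
  · rw [image_rhoCyl_cylCell hpq, cylCell_eq_cylCell_iff hp (by omega) hc]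
    refine ⟨rfl, rfl, Nat.ModEq.add_right_cancel' j₀ ?_⟩
    rw [hlift]
    exact (Nat.add_modEq_right.of_dvd hpq).trans hbc

lemma cylPre_exists_lift_subset (hp : 3 ≤ p) (hpq : p ∣ q) (hq : 0 < q)
    {x' y : Finset (ℕ × ℕ)} (hx' : x' ∈ (cylPre h q).cells) (hy : y ∈ (cylPre h p).cells)
    (hyx : y ⊆ x'.image (rhoCyl p)) :
    ∃ y' ∈ (cylPre h q).cells, y' ⊆ x' ∧ y'.image (rhoCyl p) = y := by
  have hq₃ : 3 ≤ q := hp.trans (Nat.le_of_dvd hq hpq)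
  obtain ⟨a, b, k, -, -, hb, rfl⟩ := exists_cylCell_of_mem_cells hx'
  obtain ⟨a', c, k', ha', hah', hc, rfl⟩ := exists_cylCell_of_mem_cells hy
  rw [image_rhoCyl_cylCell hpq, cylCell_subset_cylCell_iff hp hc hb] at hyx
  obtain ⟨hrows, j₀, hj₀, hcb⟩ := hyx
  refine ⟨cylCell q a' (b + j₀) k', cylCell_mem_cells hq ha' hah' (by omega), ?_, ?_⟩
  · rw [cylCell_subset_cylCell_iff hq₃ (by omega) hb]
    exact ⟨hrows, j₀, hj₀, .refl _⟩
  · rw [image_rhoCyl_cylCell hpq, cylCell_eq_cylCell_iff hp (by omega) hc]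
    exact ⟨rfl, rfl, hcb.symm⟩

lemma cylPre_exists_modEq_of_mem_near (hq : 3 ≤ q) {a b a' b' : ℕ} {k k' : Bool × Bool}
    (hb : 1 ≤ b) (hb' : 1 ≤ b') (hy : cylCell q a' b' k' ∈ (cylPre h q).near (cylCell q a b k)) :
    ∃ u ≤ 1, ∃ v ≤ 1, b' + u ≡ b + v [MOD q] := by
  obtain ⟨-, z, hz, hxz | hzx⟩ := hy
  all_goals obtain ⟨α, β, κ, -, -, hβ, rfl⟩ := exists_cylCell_of_mem_cells hz
  · obtain ⟨-, j₀, hj₀, h₀⟩ := (cylCell_subset_cylCell_iff hq hb hβ).1 hxz.1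
    obtain ⟨-, j₁, hj₁, h₁⟩ := (cylCell_subset_cylCell_iff hq hb' hβ).1 hxz.2
    have := Bool.toNat_le κ.2
    refine ⟨j₀, by omega, j₁, by omega, ?_⟩
    calc b' + j₀ ≡ β + j₁ + j₀ [MOD q] := h₁.add_right j₀
      _ = β + j₀ + j₁ := by ring
      _ ≡ b + j₁ [MOD q] := (h₀.add_right j₁).symm
  · obtain ⟨-, j₀, hj₀, h₀⟩ := (cylCell_subset_cylCell_iff hq hβ hb).1 hzx.1
    obtain ⟨-, j₁, hj₁, h₁⟩ := (cylCell_subset_cylCell_iff hq hβ hb').1 hzx.2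
    have := Bool.toNat_le k.2
    have := Bool.toNat_le k'.2
    exact ⟨j₁, by omega, j₀, by omega, h₁.symm.trans h₀⟩

lemma cylPre_injOn_image_near (hp : 3 ≤ p) (hpq : p ∣ q) (hq : 0 < q) {x' : Finset (ℕ × ℕ)}
    (hx' : x' ∈ (cylPre h q).cells) :
    Set.InjOn (Finset.image (rhoCyl p)) ((cylPre h q).near x') := by
  have hq₃ : 3 ≤ q := hp.trans (Nat.le_of_dvd hq hpq)
  obtain ⟨a, b, k, -, -, hb, rfl⟩ := exists_cylCell_of_mem_cells hx'
  intro y₁ hy₁ y₂ hy₂ himg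
  obtain ⟨a₁, b₁, k₁, -, -, hb₁, rfl⟩ := exists_cylCell_of_mem_cells hy₁.1
  obtain ⟨a₂, b₂, k₂, -, -, hb₂, rfl⟩ := exists_cylCell_of_mem_cells hy₂.1
  obtain ⟨u₁, hu₁, v₁, hv₁, h₁⟩ := cylPre_exists_modEq_of_mem_near hq₃ hb hb₁ hy₁
  obtain ⟨u₂, hu₂, v₂, hv₂, h₂⟩ := cylPre_exists_modEq_of_mem_near hq₃ hb hb₂ hy₂
  rw [image_rhoCyl_cylCell hpq, image_rhoCyl_cylCell hpq,
    cylCell_eq_cylCell_iff hp hb₁ hb₂] at himg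
  obtain ⟨rfl, rfl, hmod⟩ := himg
  exact (cylCell_eq_cylCell_iff hq₃ hb₁ hb₂).2
    ⟨rfl, rfl, modEq_of_modEq_of_near hp hpq hu₁ hv₁ hu₂ hv₂ h₁ h₂ hmod⟩

theorem cylPre_isCovering_of_dvd (hp : 3 ≤ p) (hpq : p ∣ q) (hq : 0 < q) :
    IsCovering (cylPre h q) (cylPre h p) (Finset.image (rhoCyl p)) := by
  have hq₃ : 3 ≤ q := hp.trans (Nat.le_of_dvd hq hpq)
  refine .of_lift (Finset.image_mono _) ?_ ?_ ?_
    (fun _ hx' _ hy => cylPre_exists_lift_superset hp hpq hq hx' hy)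
    (fun _ hx' _ hy => cylPre_exists_lift_subset hp hpq hq hx' hy)
    (fun _ hx' => cylPre_injOn_image_near hp hpq hq hx')
  · intro x hx
    obtain ⟨a, b, k, ha, hah, hb, rfl⟩ := exists_cylCell_of_mem_cells hx
    rw [image_rhoCyl_cylCell hpq]
    exact cylCell_mem_cells (by omega) ha hah hb
  · intro x hx
    obtain ⟨a, b, k, ha, hah, hb, rfl⟩ := exists_cylCell_of_mem_cells hx
    exact ⟨_, cylCell_mem_cells hq ha hah hb, image_rhoCyl_cylCell hpq a b k⟩
  · intro x hx
    obtain ⟨a, b, k, ha, hah, hb, rfl⟩ := exists_cylCell_of_mem_cells hx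
    rw [image_rhoCyl_cylCell hpq, rk_cylCell (by omega) ha hah hb,
      rk_cylCell (by omega) ha hah hb]

end Covering

theorem cyl_covering_general (h p : ℕ) (hp : 3 ≤ p) :
    IsCovering (cylPre h (2 * p)) (cylPre h p) (fun x => x.image (rhoCyl p)) :=
  cylPre_isCovering_of_dvd hp (dvd_mul_left p 2) (by omega)

/-- For `h, p ≥ 3`, the map on cells induced by the node map `ρ_cyl^{h,p}`
(restricted to the nodes `[h] × [2p]`) is a CC covering of the cylinder
`Cyl_{h,p}` by the cylinder `Cyl_{h,2p}`. -/
theorem cyl_covering (h p : ℕ) (hh : 3 ≤ h) (hp : 3 ≤ p) :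
    IsCovering (cylPre h (2 * p)) (cylPre h p) (fun x => x.image (rhoCyl p)) :=
  cyl_covering_general h p hp

end TDL
end

section
/- For integers h, p ≥ 3, the boundary graph ∂Möb_{h,p} of the Möbius strip CC — whose vertices are the nodes contained in some boundary 1-cell and whose edges are the boundary 1-cells — is isomorphic to a single cycle graph of length 2p. -/
namespace TDL

/-- The graph on the `0`-cells of a complex in which two distinct `0`-cells are
adjacent iff some `1`-cell contains both. -/
def zeroGraph {S : Type*} (X : PreCC S) : SimpleGraph {x : Finset S // x ∈ X.skel 0} where
  Adj u v := u ≠ v ∧ ∃ z ∈ X.skel 1, u.1 ⊆ z ∧ v.1 ⊆ z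
  symm := by
    constructor
    rintro u v ⟨hne, z, hz, h₁, h₂⟩
    exact ⟨hne.symm, z, hz, h₂, h₁⟩
  loopless := by constructor; rintro u ⟨hne, -⟩; exact hne rfl

/-- The cycle graph on `ℤ/n`: `i` and `j` are adjacent iff `i − j ≡ ±1`. -/
def cycGraph (n : ℕ) : SimpleGraph (ZMod n) where
  Adj i j := i ≠ j ∧ (i - j = 1 ∨ j - i = 1)
  symm := by constructor; rintro i j ⟨hne, h⟩; exact ⟨hne.symm, h.symm⟩
  loopless := by constructor; rintro i ⟨hne, -⟩; exact hne rfl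

end TDL

namespace TDL

/-- A boundary edge: a `1`-cell contained in exactly one `2`-cell. -/
def IsBoundaryEdge {S : Type*} (X : PreCC S) (x : Finset S) : Prop :=
  x ∈ X.skel 1 ∧ {y | y ∈ X.skel 2 ∧ x ⊆ y}.ncard = 1

/-- The boundary graph `∂X`: vertices are the nodes contained in some boundary
edge, and two distinct vertices are joined iff some boundary edge contains both. -/
def boundaryGraph {S : Type*} (X : PreCC S) :
    SimpleGraph {v : S // ∃ x, IsBoundaryEdge X x ∧ v ∈ x} where
  Adj u v := u ≠ v ∧ ∃ x, IsBoundaryEdge X x ∧ u.1 ∈ x ∧ v.1 ∈ x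
  symm := by
    constructor
    rintro u v ⟨hne, x, hx, hu, hv⟩
    exact ⟨hne.symm, x, hx, hv, hu⟩
  loopless := by constructor; rintro u ⟨hne, -⟩; exact hne rfl

/-- The disjoint union of two simple graphs. -/
def graphSum {V W : Type*} (G : SimpleGraph V) (H : SimpleGraph W) :
    SimpleGraph (V ⊕ W) where
  Adj x y := Sum.LiftRel G.Adj H.Adj x y
  symm := by
    constructor
    rintro x y (h | h)
    · exact Sum.LiftRel.inl (G.adj_symm h)
    · exact Sum.LiftRel.inr (H.adj_symm h)
  loopless := by
    constructor
    rintro x (h | h)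
    · exact G.irrefl h
    · exact H.irrefl h

end TDL

/-!
The rank of a cell is the least `k₁ + k₂` over its representations `s_k`, and `s_k` has at most
`2 ^ (k₁ + k₂)` nodes; in `Möb_{h,p}` every `s_k` has exactly that many, so the 1-cells and 2-cells
are explicit: the edges and squares of the `h × p` grid, plus the twisted edges and squares joining
column `p` to column `1` with the rows reversed. An edge across the strip lies in the squares on
both of its sides, and so does an edge along the strip unless it runs in row `1` or row `h`.
Since the seam exchanges rows `1` and `h`, the boundary rows close up into one cycle of length
`2p` instead of two cycles of length `p`.
-/

namespace TDL

theorem isBoundaryEdge_iff_existsUnique {S : Type*} {X : PreCC S} {x : Finset S} :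
    IsBoundaryEdge X x ↔ x ∈ X.skel 1 ∧ ∃! y, y ∈ X.skel 2 ∧ x ⊆ y := by
  rw [IsBoundaryEdge, Set.ncard_eq_one]
  simp only [Set.eq_singleton_iff_unique_mem]
  rfl

theorem not_isBoundaryEdge_of_subset {S : Type*} {X : PreCC S} {x y₁ y₂ : Finset S}
    (h₁ : y₁ ∈ X.skel 2) (h₂ : y₂ ∈ X.skel 2) (hx₁ : x ⊆ y₁) (hx₂ : x ⊆ y₂) (hne : y₁ ≠ y₂) :
    ¬ IsBoundaryEdge X x :=
  fun hx => hne ((isBoundaryEdge_iff_existsUnique.mp hx).2.unique ⟨h₁, hx₁⟩ ⟨h₂, hx₂⟩)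

theorem cycGraph_adj_iff_exists {n : ℕ} {i j : ZMod n} :
    (cycGraph n).Adj i j ↔ i ≠ j ∧ ∃ k, (i = k ∨ i = k + 1) ∧ (j = k ∨ j = k + 1) := by
  refine and_congr_right fun hij => ⟨?_, ?_⟩
  · rintro (h | h)
    · exact ⟨j, Or.inr (by rw [← h, add_sub_cancel]), Or.inl rfl⟩
    · exact ⟨i, Or.inl rfl, Or.inr (by rw [← h, add_sub_cancel])⟩
  · rintro ⟨k, rfl | rfl, rfl | rfl⟩ <;> simp at hij ⊢

theorem exists_zmod_iff_exists_lt {n : ℕ} [NeZero n] {P : ℕ → ℕ → Prop} :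
    (∃ i : ZMod n, P i.val (i + 1).val) ↔ ∃ m < n, P m ((m + 1) % n) := by
  have hval (i : ZMod n) : (i + 1).val = (i.val + 1) % n := by
    rw [ZMod.val_add, ZMod.val_one_eq_one_mod, Nat.add_mod_mod]
  constructor
  · rintro ⟨i, hi⟩
    exact ⟨i.val, i.val_lt, hval i ▸ hi⟩
  · rintro ⟨m, hm, hP⟩
    refine ⟨m, ?_⟩
    rwa [hval, ZMod.val_cast_of_lt hm]

theorem boundaryGraph_iso_cycGraph {S : Type*} [DecidableEq S] {X : PreCC S} {n : ℕ}
    {φ : ZMod n → S} (hφ : Function.Injective φ)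
    (hX : ∀ x, IsBoundaryEdge X x ↔ ∃ i, x = {φ i, φ (i + 1)}) :
    Nonempty (boundaryGraph X ≃g cycGraph n) := by
  have hvert : ∀ v, v ∈ Set.range φ ↔ ∃ x, IsBoundaryEdge X x ∧ v ∈ x := by
    intro v
    simp only [hX]
    constructor
    · rintro ⟨i, rfl⟩
      exact ⟨_, ⟨i, rfl⟩, Finset.mem_insert_self _ _⟩
    · rintro ⟨x, ⟨i, rfl⟩, hv⟩
      rw [Finset.mem_insert, Finset.mem_singleton] at hv
      rcases hv with rfl | rfl <;> exact ⟨_, rfl⟩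
  let e := (Equiv.ofInjective φ hφ).trans (Equiv.subtypeEquivRight hvert)
  refine ⟨RelIso.symm ⟨e, fun {i j} => ?_⟩⟩
  change (e i ≠ e j ∧ ∃ x, IsBoundaryEdge X x ∧ φ i ∈ x ∧ φ j ∈ x) ↔ _
  simp [hX, e.injective.ne_iff, cycGraph_adj_iff_exists, hφ.eq_iff]

section Strip

variable {h p : ℕ}

theorem card_stripCell_le (ρ : ℕ × ℕ → ℕ × ℕ) (s : ℕ × ℕ) (k : Bool × Bool) :
    (stripCell ρ s k).card ≤ 2 ^ stripRank k := by
  have hcard : ∀ k : Bool × Bool,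
      (Finset.univ.filter fun k' : Bool × Bool => k'.1 ≤ k.1 ∧ k'.2 ≤ k.2).card =
        2 ^ stripRank k := by
    decide
  exact Finset.card_image_le.trans_eq (hcard k)

theorem exists_eq_stripCell_of_mem_skel {ρ : ℕ × ℕ → ℕ × ℕ} {x : Finset (ℕ × ℕ)} {r : ℕ}
    (hx : x ∈ (stripPre h p ρ).skel r) :
    ∃ s ∈ gridNodes h p, ∃ k, ρ (addK s k) ∈ gridNodes h p ∧ x = stripCell ρ s k ∧
      stripRank k = r := by
  obtain ⟨⟨s, hs, k, hk, hxs⟩, hr⟩ := hx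
  obtain ⟨s, hs, k, hk, hxs, hrk⟩ :=
    Nat.sInf_mem (s := {r | ∃ s ∈ gridNodes h p, ∃ k, ρ (addK s k) ∈ gridNodes h p ∧
      x = stripCell ρ s k ∧ r = stripRank k}) ⟨_, s, hs, k, hk, hxs, rfl⟩
  exact ⟨s, hs, k, hk, hxs, hrk.symm.trans hr⟩

theorem mem_skel_of_eq_stripCell {ρ : ℕ × ℕ → ℕ × ℕ} {x : Finset (ℕ × ℕ)} {s : ℕ × ℕ}
    {k : Bool × Bool} (hs : s ∈ gridNodes h p) (hk : ρ (addK s k) ∈ gridNodes h p)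
    (hx : x = stripCell ρ s k) (hcard : x.card = 2 ^ stripRank k) :
    x ∈ (stripPre h p ρ).skel (stripRank k) := by
  refine ⟨⟨s, hs, k, hk, hx⟩, le_antisymm (Nat.sInf_le ⟨s, hs, k, hk, hx, rfl⟩) ?_⟩
  refine le_csInf ⟨_, s, hs, k, hk, hx, rfl⟩ ?_
  rintro _ ⟨s', -, k', -, hx', rfl⟩
  have := hcard ▸ hx' ▸ card_stripCell_le ρ s' k'
  exact (Nat.pow_le_pow_iff_right one_lt_two).mp this

theorem stripCell_true_false (ρ : ℕ × ℕ → ℕ × ℕ) (a b : ℕ) :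
    stripCell ρ (a, b) (true, false) = {ρ (a, b), ρ (a + 1, b)} := by
  rw [stripCell, show (Finset.univ.filter fun k' : Bool × Bool => k'.1 ≤ true ∧ k'.2 ≤ false) =
    {(false, false), (true, false)} by decide]
  simp [addK]

theorem stripCell_false_true (ρ : ℕ × ℕ → ℕ × ℕ) (a b : ℕ) :
    stripCell ρ (a, b) (false, true) = {ρ (a, b), ρ (a, b + 1)} := by
  rw [stripCell, show (Finset.univ.filter fun k' : Bool × Bool => k'.1 ≤ false ∧ k'.2 ≤ true) =
    {(false, false), (false, true)} by decide]
  simp [addK]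

theorem stripCell_true_true (ρ : ℕ × ℕ → ℕ × ℕ) (a b : ℕ) :
    stripCell ρ (a, b) (true, true) =
      {ρ (a, b), ρ (a + 1, b), ρ (a, b + 1), ρ (a + 1, b + 1)} := by
  rw [stripCell, show (Finset.univ.filter fun k' : Bool × Bool => k'.1 ≤ true ∧ k'.2 ≤ true) =
    {(false, false), (true, false), (false, true), (true, true)} by decide]
  simp [addK]

theorem stripRank_eq_one_iff {k : Bool × Bool} :
    stripRank k = 1 ↔ k = (true, false) ∨ k = (false, true) := by
  revert k; decide

theorem stripRank_eq_two_iff {k : Bool × Bool} : stripRank k = 2 ↔ k = (true, true) := by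
  revert k; decide

end Strip

section Mobius

variable {h p : ℕ}

theorem residue_eq_of_le {n m : ℕ} (h1 : 1 ≤ m) (h2 : m ≤ n) : residue n m = m := by
  rw [residue, Nat.mod_eq_of_lt (by omega)]
  omega

theorem rhoMob_of_le {a b : ℕ} (hb : 1 ≤ b) (hbp : b ≤ p) : rhoMob h p (a, b) = (a, b) := by
  rw [rhoMob, if_pos (by rw [residue_eq_of_le hb (by omega)]; exact hbp),
    residue_eq_of_le hb hbp]

theorem rhoMob_succ_self (hp : 1 ≤ p) (a : ℕ) : rhoMob h p (a, p + 1) = (h + 1 - a, 1) := by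
  rw [rhoMob, if_neg (by rw [residue_eq_of_le (by omega) (by omega)]; omega)]
  simp [residue]

def acrossEdge (a b : ℕ) : Finset (ℕ × ℕ) := {(a, b), (a + 1, b)}

def alongEdge (a b : ℕ) : Finset (ℕ × ℕ) := {(a, b), (a, b + 1)}

/-- An edge across the seam between columns `p` and `1`, where `ρ_möb` reverses the rows. -/
def twistEdge (h p a : ℕ) : Finset (ℕ × ℕ) := {(a, p), (h + 1 - a, 1)}

def square (a b : ℕ) : Finset (ℕ × ℕ) := {(a, b), (a + 1, b), (a, b + 1), (a + 1, b + 1)}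

def twistSquare (h p a : ℕ) : Finset (ℕ × ℕ) :=
  {(a, p), (a + 1, p), (h + 1 - a, 1), (h - a, 1)}

theorem mem_square_iff {a b c d : ℕ} :
    (c, d) ∈ square a b ↔ (c = a ∨ c = a + 1) ∧ (d = b ∨ d = b + 1) := by
  simp only [square, Finset.mem_insert, Finset.mem_singleton, Prod.mk.injEq]
  tauto

theorem mem_twistSquare_iff {a c d : ℕ} :
    (c, d) ∈ twistSquare h p a ↔
      (c = a ∨ c = a + 1) ∧ d = p ∨ (c = h + 1 - a ∨ c = h - a) ∧ d = 1 := by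
  simp only [twistSquare, Finset.mem_insert, Finset.mem_singleton, Prod.mk.injEq]
  tauto

theorem acrossEdge_subset_iff {a b : ℕ} {y : Finset (ℕ × ℕ)} :
    acrossEdge a b ⊆ y ↔ (a, b) ∈ y ∧ (a + 1, b) ∈ y := by
  rw [acrossEdge, Finset.insert_subset_iff, Finset.singleton_subset_iff]

theorem alongEdge_subset_iff {a b : ℕ} {y : Finset (ℕ × ℕ)} :
    alongEdge a b ⊆ y ↔ (a, b) ∈ y ∧ (a, b + 1) ∈ y := by
  rw [alongEdge, Finset.insert_subset_iff, Finset.singleton_subset_iff]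

theorem twistEdge_subset_iff {a : ℕ} {y : Finset (ℕ × ℕ)} :
    twistEdge h p a ⊆ y ↔ (a, p) ∈ y ∧ (h + 1 - a, 1) ∈ y := by
  rw [twistEdge, Finset.insert_subset_iff, Finset.singleton_subset_iff]

theorem stripCell_rhoMob_true_false {a b : ℕ} (hb : 1 ≤ b) (hbp : b ≤ p) :
    stripCell (rhoMob h p) (a, b) (true, false) = acrossEdge a b := by
  rw [stripCell_true_false, rhoMob_of_le hb hbp, rhoMob_of_le hb hbp, acrossEdge]

theorem stripCell_rhoMob_false_true_of_lt {a b : ℕ} (hb : 1 ≤ b) (hbp : b < p) :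
    stripCell (rhoMob h p) (a, b) (false, true) = alongEdge a b := by
  rw [stripCell_false_true, rhoMob_of_le hb hbp.le, rhoMob_of_le (by omega) hbp, alongEdge]

theorem stripCell_rhoMob_false_true_self (hp : 1 ≤ p) (a : ℕ) :
    stripCell (rhoMob h p) (a, p) (false, true) = twistEdge h p a := by
  rw [stripCell_false_true, rhoMob_of_le hp le_rfl, rhoMob_succ_self hp, twistEdge]

theorem stripCell_rhoMob_true_true_of_lt {a b : ℕ} (hb : 1 ≤ b) (hbp : b < p) :
    stripCell (rhoMob h p) (a, b) (true, true) = square a b := by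
  rw [stripCell_true_true, rhoMob_of_le hb hbp.le, rhoMob_of_le hb hbp.le,
    rhoMob_of_le (by omega) hbp, rhoMob_of_le (by omega) hbp, square]

theorem stripCell_rhoMob_true_true_self (hp : 1 ≤ p) (a : ℕ) :
    stripCell (rhoMob h p) (a, p) (true, true) = twistSquare h p a := by
  rw [stripCell_true_true, rhoMob_of_le hp le_rfl, rhoMob_of_le hp le_rfl, rhoMob_succ_self hp,
    rhoMob_succ_self hp, Nat.add_sub_add_right, twistSquare]

theorem acrossEdge_mem_skel_one {a b : ℕ} (ha : 1 ≤ a) (hah : a < h) (hb : 1 ≤ b)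
    (hbp : b ≤ p) : acrossEdge a b ∈ (mobPre h p).skel 1 := by
  refine mem_skel_of_eq_stripCell (s := (a, b)) (k := (true, false)) ⟨ha, hah.le, hb, hbp⟩ ?_
    (stripCell_rhoMob_true_false hb hbp).symm (Finset.card_pair (by simp))
  change rhoMob h p (a + 1, b) ∈ gridNodes h p
  rw [rhoMob_of_le hb hbp]
  exact ⟨by omega, hah, hb, hbp⟩

theorem alongEdge_mem_skel_one {a b : ℕ} (ha : 1 ≤ a) (hah : a ≤ h) (hb : 1 ≤ b)
    (hbp : b < p) : alongEdge a b ∈ (mobPre h p).skel 1 := by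
  refine mem_skel_of_eq_stripCell (s := (a, b)) (k := (false, true)) ⟨ha, hah, hb, hbp.le⟩ ?_
    (stripCell_rhoMob_false_true_of_lt hb hbp).symm (Finset.card_pair (by simp))
  change rhoMob h p (a, b + 1) ∈ gridNodes h p
  rw [rhoMob_of_le (by omega) hbp]
  exact ⟨ha, hah, by omega, hbp⟩

theorem twistEdge_mem_skel_one (hp : 2 ≤ p) {a : ℕ} (ha : 1 ≤ a) (hah : a ≤ h) :
    twistEdge h p a ∈ (mobPre h p).skel 1 := by
  refine mem_skel_of_eq_stripCell (s := (a, p)) (k := (false, true)) ⟨ha, hah, by omega, le_rfl⟩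
    ?_ (stripCell_rhoMob_false_true_self (by omega) a).symm
    (Finset.card_pair (by simp only [ne_eq, Prod.mk.injEq]; omega))
  change rhoMob h p (a, p + 1) ∈ gridNodes h p
  rw [rhoMob_succ_self (by omega)]
  exact ⟨by omega, by omega, le_rfl, by omega⟩

theorem square_mem_skel_two {a b : ℕ} (ha : 1 ≤ a) (hah : a < h) (hb : 1 ≤ b) (hbp : b < p) :
    square a b ∈ (mobPre h p).skel 2 := by
  refine mem_skel_of_eq_stripCell (s := (a, b)) (k := (true, true)) ⟨ha, hah.le, hb, hbp.le⟩ ?_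
    (stripCell_rhoMob_true_true_of_lt hb hbp).symm (by simp [square, stripRank])
  change rhoMob h p (a + 1, b + 1) ∈ gridNodes h p
  rw [rhoMob_of_le (by omega) hbp]
  exact ⟨by omega, hah, by omega, hbp⟩

theorem twistSquare_mem_skel_two (hp : 2 ≤ p) {a : ℕ} (ha : 1 ≤ a) (hah : a < h) :
    twistSquare h p a ∈ (mobPre h p).skel 2 := by
  refine mem_skel_of_eq_stripCell (s := (a, p)) (k := (true, true))
    ⟨ha, hah.le, by omega, le_rfl⟩ ?_ (stripCell_rhoMob_true_true_self (by omega) a).symm ?_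
  · change rhoMob h p (a + 1, p + 1) ∈ gridNodes h p
    rw [rhoMob_succ_self (by omega)]
    exact ⟨by omega, by omega, le_rfl, by omega⟩
  · rw [twistSquare]
    repeat rw [Finset.card_insert_of_notMem (by
      simp only [Finset.mem_insert, Finset.mem_singleton, Prod.mk.injEq]; omega)]
    rfl

theorem mem_skel_one_mobPre_iff (hp : 2 ≤ p) {x : Finset (ℕ × ℕ)} :
    x ∈ (mobPre h p).skel 1 ↔
      (∃ a b, 1 ≤ a ∧ a < h ∧ 1 ≤ b ∧ b ≤ p ∧ x = acrossEdge a b) ∨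
      (∃ a b, 1 ≤ a ∧ a ≤ h ∧ 1 ≤ b ∧ b < p ∧ x = alongEdge a b) ∨
      (∃ a, 1 ≤ a ∧ a ≤ h ∧ x = twistEdge h p a) := by
  constructor
  · intro hx
    obtain ⟨⟨a, b⟩, ⟨ha, hah, hb, hbp⟩, k, hk, rfl, hr⟩ := exists_eq_stripCell_of_mem_skel hx
    rcases stripRank_eq_one_iff.mp hr with rfl | rfl
    · change rhoMob h p (a + 1, b) ∈ gridNodes h p at hk
      rw [rhoMob_of_le hb hbp] at hk
      exact Or.inl ⟨a, b, ha, hk.2.1, hb, hbp, stripCell_rhoMob_true_false hb hbp⟩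
    · rcases hbp.lt_or_eq with hbp | rfl
      · exact Or.inr <| Or.inl ⟨a, b, ha, hah, hb, hbp, stripCell_rhoMob_false_true_of_lt hb hbp⟩
      · exact Or.inr <| Or.inr ⟨a, ha, hah, stripCell_rhoMob_false_true_self hb a⟩
  · rintro (⟨a, b, ha, hah, hb, hbp, rfl⟩ | ⟨a, b, ha, hah, hb, hbp, rfl⟩ | ⟨a, ha, hah, rfl⟩)
    · exact acrossEdge_mem_skel_one ha hah hb hbp
    · exact alongEdge_mem_skel_one ha hah hb hbp
    · exact twistEdge_mem_skel_one hp ha hah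

theorem mem_skel_two_mobPre_iff (hp : 2 ≤ p) {y : Finset (ℕ × ℕ)} :
    y ∈ (mobPre h p).skel 2 ↔
      (∃ a b, 1 ≤ a ∧ a < h ∧ 1 ≤ b ∧ b < p ∧ y = square a b) ∨
      (∃ a, 1 ≤ a ∧ a < h ∧ y = twistSquare h p a) := by
  constructor
  · intro hy
    obtain ⟨⟨a, b⟩, ⟨ha, -, hb, hbp⟩, k, hk, rfl, hr⟩ := exists_eq_stripCell_of_mem_skel hy
    obtain rfl := stripRank_eq_two_iff.mp hr
    change rhoMob h p (a + 1, b + 1) ∈ gridNodes h p at hk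
    rcases hbp.lt_or_eq with hbp | rfl
    · rw [rhoMob_of_le (by omega) hbp] at hk
      exact Or.inl ⟨a, b, ha, hk.2.1, hb, hbp, stripCell_rhoMob_true_true_of_lt hb hbp⟩
    · rw [rhoMob_succ_self hb] at hk
      exact Or.inr ⟨a, ha, by have := hk.1; omega, stripCell_rhoMob_true_true_self hb a⟩
  · rintro (⟨a, b, ha, hah, hb, hbp, rfl⟩ | ⟨a, ha, hah, rfl⟩)
    · exact square_mem_skel_two ha hah hb hbp
    · exact twistSquare_mem_skel_two hp ha hah

theorem not_isBoundaryEdge_acrossEdge (hp : 3 ≤ p) {a b : ℕ} (ha : 1 ≤ a) (hah : a < h)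
    (hb : 1 ≤ b) (hbp : b ≤ p) : ¬ IsBoundaryEdge (mobPre h p) (acrossEdge a b) := by
  rcases hb.eq_or_lt with rfl | hb
  · refine not_isBoundaryEdge_of_subset (square_mem_skel_two ha hah le_rfl (by omega))
      (twistSquare_mem_skel_two (a := h - a) (by omega) (by omega) (by omega)) ?_ ?_
      (ne_of_mem_of_not_mem' (a := (a, 2)) (mem_square_iff.mpr (by omega))
        (by rw [mem_twistSquare_iff]; omega))
    · rw [acrossEdge_subset_iff, mem_square_iff, mem_square_iff]; omega
    · rw [acrossEdge_subset_iff, mem_twistSquare_iff, mem_twistSquare_iff]; omega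
  rcases hbp.lt_or_eq with hbp | rfl
  · refine not_isBoundaryEdge_of_subset (square_mem_skel_two ha hah (by omega) hbp)
      (square_mem_skel_two (b := b - 1) ha hah (by omega) (by omega)) ?_ ?_
      (ne_of_mem_of_not_mem' (a := (a, b + 1)) (mem_square_iff.mpr (by omega))
        (by rw [mem_square_iff]; omega))
    · rw [acrossEdge_subset_iff, mem_square_iff, mem_square_iff]; omega
    · rw [acrossEdge_subset_iff, mem_square_iff, mem_square_iff]; omega
  · refine not_isBoundaryEdge_of_subset (twistSquare_mem_skel_two (by omega) ha hah)
      (square_mem_skel_two (b := b - 1) ha hah (by omega) (by omega)) ?_ ?_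
      (ne_of_mem_of_not_mem' (a := (h - a, 1)) (mem_twistSquare_iff.mpr (by omega))
        (by rw [mem_square_iff]; omega))
    · rw [acrossEdge_subset_iff, mem_twistSquare_iff, mem_twistSquare_iff]; omega
    · rw [acrossEdge_subset_iff, mem_square_iff, mem_square_iff]; omega

theorem not_isBoundaryEdge_alongEdge {a b : ℕ} (ha : 1 < a) (hah : a < h) (hb : 1 ≤ b)
    (hbp : b < p) : ¬ IsBoundaryEdge (mobPre h p) (alongEdge a b) :=
  not_isBoundaryEdge_of_subset (square_mem_skel_two (by omega) hah hb hbp)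
    (square_mem_skel_two (a := a - 1) (by omega) (by omega) hb hbp)
    (by rw [alongEdge_subset_iff, mem_square_iff, mem_square_iff]; omega)
    (by rw [alongEdge_subset_iff, mem_square_iff, mem_square_iff]; omega)
    (ne_of_mem_of_not_mem' (a := (a + 1, b)) (mem_square_iff.mpr (by omega))
      (by rw [mem_square_iff]; omega))

theorem not_isBoundaryEdge_twistEdge (hp : 2 ≤ p) {a : ℕ} (ha : 1 < a) (hah : a < h) :
    ¬ IsBoundaryEdge (mobPre h p) (twistEdge h p a) :=
  not_isBoundaryEdge_of_subset (twistSquare_mem_skel_two hp (by omega) hah)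
    (twistSquare_mem_skel_two (a := a - 1) hp (by omega) (by omega))
    (by rw [twistEdge_subset_iff, mem_twistSquare_iff, mem_twistSquare_iff]; omega)
    (by rw [twistEdge_subset_iff, mem_twistSquare_iff, mem_twistSquare_iff]; omega)
    (ne_of_mem_of_not_mem' (a := (a + 1, p)) (mem_twistSquare_iff.mpr (by omega))
      (by rw [mem_twistSquare_iff]; omega))

theorem isBoundaryEdge_alongEdge (hh : 2 ≤ h) (hp : 3 ≤ p) {a b : ℕ} (ha : a = 1 ∨ a = h)
    (hb : 1 ≤ b) (hbp : b < p) : IsBoundaryEdge (mobPre h p) (alongEdge a b) := by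
  refine isBoundaryEdge_iff_existsUnique.mpr
    ⟨alongEdge_mem_skel_one (by omega) (by omega) hb hbp, square (min a (h - 1)) b,
      ⟨square_mem_skel_two (by omega) (by omega) hb hbp, ?_⟩, ?_⟩
  · rw [alongEdge_subset_iff, mem_square_iff, mem_square_iff]; omega
  · rintro y ⟨hy, hxy⟩
    rcases (mem_skel_two_mobPre_iff (by omega)).mp hy with
      ⟨a', b', ha', hah', -, -, rfl⟩ | ⟨a', -, -, rfl⟩
    · rw [alongEdge_subset_iff, mem_square_iff, mem_square_iff] at hxy
      congr 1 <;> omega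
    · rw [alongEdge_subset_iff, mem_twistSquare_iff, mem_twistSquare_iff] at hxy
      omega

theorem isBoundaryEdge_twistEdge (hh : 2 ≤ h) (hp : 3 ≤ p) {a : ℕ} (ha : a = 1 ∨ a = h) :
    IsBoundaryEdge (mobPre h p) (twistEdge h p a) := by
  refine isBoundaryEdge_iff_existsUnique.mpr
    ⟨twistEdge_mem_skel_one (by omega) (by omega) (by omega), twistSquare h p (min a (h - 1)),
      ⟨twistSquare_mem_skel_two (by omega) (by omega) (by omega), ?_⟩, ?_⟩
  · rw [twistEdge_subset_iff, mem_twistSquare_iff, mem_twistSquare_iff]; omega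
  · rintro y ⟨hy, hxy⟩
    rcases (mem_skel_two_mobPre_iff (by omega)).mp hy with
      ⟨a', b', -, -, hb', hbp', rfl⟩ | ⟨a', ha', hah', rfl⟩
    · rw [twistEdge_subset_iff, mem_square_iff, mem_square_iff] at hxy
      omega
    · rw [twistEdge_subset_iff, mem_twistSquare_iff, mem_twistSquare_iff] at hxy
      congr 1; omega

theorem isBoundaryEdge_mobPre_iff (hh : 3 ≤ h) (hp : 3 ≤ p) {x : Finset (ℕ × ℕ)} :
    IsBoundaryEdge (mobPre h p) x ↔
      ∃ a, (a = 1 ∨ a = h) ∧ ((∃ b, 1 ≤ b ∧ b < p ∧ x = alongEdge a b) ∨ x = twistEdge h p a) := by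
  constructor
  · intro hx
    rcases (mem_skel_one_mobPre_iff (by omega)).mp (isBoundaryEdge_iff_existsUnique.mp hx).1 with
      ⟨a, b, ha, hah, hb, hbp, rfl⟩ | ⟨a, b, ha, hah, hb, hbp, rfl⟩ | ⟨a, ha, hah, rfl⟩
    · exact absurd hx (not_isBoundaryEdge_acrossEdge hp ha hah hb hbp)
    · by_cases ha' : a = 1 ∨ a = h
      · exact ⟨a, ha', Or.inl ⟨b, hb, hbp, rfl⟩⟩
      · exact absurd hx (not_isBoundaryEdge_alongEdge (by omega) (by omega) hb hbp)
    · by_cases ha' : a = 1 ∨ a = h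
      · exact ⟨a, ha', Or.inr rfl⟩
      · exact absurd hx (not_isBoundaryEdge_twistEdge (by omega) (by omega) (by omega))
  · rintro ⟨a, ha, ⟨b, hb, hbp, rfl⟩ | rfl⟩
    · exact isBoundaryEdge_alongEdge (by omega) hp ha hb hbp
    · exact isBoundaryEdge_twistEdge (by omega) hp ha

/-- The boundary cycle of `Möb_{h,p}`, indexed by `0 ≤ m < 2p`: row `1`, then row `h` beyond
the seam. -/
def mobBoundaryNode (h p m : ℕ) : ℕ × ℕ :=
  if m < p then (1, m + 1) else (h, m - p + 1)

theorem mobBoundaryNode_of_lt {m : ℕ} (hm : m < p) : mobBoundaryNode h p m = (1, m + 1) :=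
  if_pos hm

theorem mobBoundaryNode_of_le {m : ℕ} (hm : p ≤ m) : mobBoundaryNode h p m = (h, m - p + 1) :=
  if_neg hm.not_gt

theorem exists_lt_mobBoundaryNode_iff (hp : 1 ≤ p) {x : Finset (ℕ × ℕ)} :
    (∃ m < 2 * p, x = {mobBoundaryNode h p m, mobBoundaryNode h p ((m + 1) % (2 * p))}) ↔
      ∃ a, (a = 1 ∨ a = h) ∧ ((∃ b, 1 ≤ b ∧ b < p ∧ x = alongEdge a b) ∨ x = twistEdge h p a) := by
  constructor
  · rintro ⟨m, hm, rfl⟩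
    obtain hm' | rfl | hm' | hm' : m + 1 < p ∨ m + 1 = p ∨ (p ≤ m ∧ m + 1 < 2 * p) ∨
        m + 1 = 2 * p := by omega
    · refine ⟨1, Or.inl rfl, Or.inl ⟨m + 1, by omega, hm', ?_⟩⟩
      rw [Nat.mod_eq_of_lt (by omega), mobBoundaryNode_of_lt (by omega), mobBoundaryNode_of_lt hm']
      rfl
    · refine ⟨1, Or.inl rfl, Or.inr ?_⟩
      rw [Nat.mod_eq_of_lt (by omega), mobBoundaryNode_of_lt (by omega),
        mobBoundaryNode_of_le le_rfl]
      simp [twistEdge]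
    · refine ⟨h, Or.inr rfl, Or.inl ⟨m - p + 1, by omega, by omega, ?_⟩⟩
      rw [Nat.mod_eq_of_lt hm'.2, mobBoundaryNode_of_le hm'.1, mobBoundaryNode_of_le (by omega),
        show m + 1 - p = m - p + 1 by omega]
      rfl
    · refine ⟨h, Or.inr rfl, Or.inr ?_⟩
      rw [hm', Nat.mod_self, mobBoundaryNode_of_le (by omega), mobBoundaryNode_of_lt (by omega),
        show m - p + 1 = p by omega]
      simp [twistEdge]
  · rintro ⟨a, rfl | rfl, ⟨b, hb, hbp, rfl⟩ | rfl⟩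
    · refine ⟨b - 1, by omega, ?_⟩
      rw [Nat.mod_eq_of_lt (by omega), mobBoundaryNode_of_lt (by omega),
        mobBoundaryNode_of_lt (by omega), Nat.sub_add_cancel hb]
      rfl
    · refine ⟨p - 1, by omega, ?_⟩
      rw [Nat.mod_eq_of_lt (by omega), mobBoundaryNode_of_lt (by omega),
        mobBoundaryNode_of_le (by omega), Nat.sub_add_cancel hp]
      simp [twistEdge]
    · refine ⟨p + b - 1, by omega, ?_⟩
      rw [Nat.mod_eq_of_lt (by omega), mobBoundaryNode_of_le (by omega),
        mobBoundaryNode_of_le (by omega), show p + b - 1 - p + 1 = b by omega,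
        show p + b - 1 + 1 - p + 1 = b + 1 by omega]
      rfl
    · refine ⟨2 * p - 1, by omega, ?_⟩
      rw [Nat.sub_add_cancel (by omega), Nat.mod_self, mobBoundaryNode_of_le (by omega),
        mobBoundaryNode_of_lt (by omega), show 2 * p - 1 - p + 1 = p by omega]
      simp [twistEdge]

theorem mobBoundaryNode_injOn (hh : 2 ≤ h) :
    Set.InjOn (mobBoundaryNode h p) (Set.Iio (2 * p)) := by
  intro m hm n hn hmn
  simp only [Set.mem_Iio] at hm hn
  unfold mobBoundaryNode at hmn
  split_ifs at hmn <;> simp only [Prod.mk.injEq] at hmn <;> omega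

end Mobius

/-- For `h, p ≥ 3`, the boundary graph of the Möbius strip `Möb_{h,p}` is
isomorphic to a single cycle graph of length `2p`. -/
theorem mob_boundary_iso (h p : ℕ) (hh : 3 ≤ h) (hp : 3 ≤ p) :
    Nonempty (boundaryGraph (mobPre h p) ≃g cycGraph (2 * p)) := by
  have : NeZero (2 * p) := ⟨by omega⟩
  refine boundaryGraph_iso_cycGraph (φ := fun i : ZMod (2 * p) => mobBoundaryNode h p i.val)
    (fun i j hij => ZMod.val_injective _ (mobBoundaryNode_injOn (by omega) i.val_lt j.val_lt hij))
    fun x => ?_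
  rw [isBoundaryEdge_mobPre_iff hh hp, ← exists_lt_mobBoundaryNode_iff (by omega)]
  exact (exists_zmod_iff_exists_lt
    (P := fun m m' => x = {mobBoundaryNode h p m, mobBoundaryNode h p m'})).symm

end TDL
end

section
/- For integers n ≥ 1 and k > 3, the 3-cliques (triangles) of the star graph Star_{n,k} are exactly the vertex sets {b_i, a_{ni}, a_{ni+1}} for i ∈ {1,…,k}, with the indices of the a-vertices taken modulo nk. -/
namespace TDL

/-- The adjacency relation of the star graph `Star_{n,k}`: vertices are
`a_i` (`i ∈ ℤ/nk`, left summand) and `b_i` (`i ∈ ℤ/k`, right summand);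
`a_i ∼ a_j` iff `i − j ≡ ±1 (mod nk)`, and `b_i ∼ a_{n·i}, a_{n·i+1}`. -/
def starAdj (n k : ℕ) : ZMod (n * k) ⊕ ZMod k → ZMod (n * k) ⊕ ZMod k → Prop
  | .inl i, .inl j => i ≠ j ∧ (i - j = 1 ∨ j - i = 1)
  | .inl j, .inr i => j = ((n * i.val : ℕ) : ZMod (n * k)) ∨
      j = ((n * i.val + 1 : ℕ) : ZMod (n * k))
  | .inr i, .inl j => j = ((n * i.val : ℕ) : ZMod (n * k)) ∨
      j = ((n * i.val + 1 : ℕ) : ZMod (n * k))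
  | .inr _, .inr _ => False

/-- The star graph `Star_{n,k}`. -/
def starGraph (n k : ℕ) : SimpleGraph (ZMod (n * k) ⊕ ZMod k) where
  Adj := starAdj n k
  symm := by
    constructor
    rintro (i | i) (j | j) h
    · exact ⟨h.1.symm, h.2.symm⟩
    · exact h
    · exact h
    · exact h.elim
  loopless := by
    constructor
    rintro (i | i) h
    · exact h.1 rfl
    · exact h

end TDL

/-! Three `a`-vertices pairwise differing by `±1` would force `3 = 0` in `ℤ/nk`, which is
impossible for `k ≥ 4`. So every triangle contains some `b_i`, and hence lies in `b_i` together
with its neighbourhood `{a_{ni}, a_{ni+1}}`, a set of at most three vertices. -/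

namespace TDL

theorem three_eq_zero_of_pairwise_sub_eq_one {R : Type*} [CommRing R] {a b c : R}
    (hab : a - b = 1 ∨ b - a = 1) (hbc : b - c = 1 ∨ c - b = 1) (hac : a - c = 1 ∨ c - a = 1) :
    (3 : R) = 0 := by
  rcases hab with hab | hab <;> rcases hbc with hbc | hbc <;> rcases hac with hac | hac <;>
    grind

theorem three_ne_zero_zmod_mul {n k : ℕ} (hk : 4 ≤ k) : (3 : ZMod (n * k)) ≠ 0 := by
  rw [← Nat.cast_ofNat, Ne, ZMod.natCast_eq_zero_iff]
  intro h
  rcases Nat.eq_zero_or_pos n with rfl | hn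
  · simp at h
  · have := Nat.le_of_dvd (by norm_num) h
    nlinarith

def starTriangle (n k : ℕ) (i : ZMod k) : Finset (ZMod (n * k) ⊕ ZMod k) :=
  {.inr i, .inl ((n * i.val : ℕ) : ZMod (n * k)), .inl ((n * i.val + 1 : ℕ) : ZMod (n * k))}

variable {n k : ℕ}

theorem starGraph_neighborSet_inr (i : ZMod k) :
    (starGraph n k).neighborSet (.inr i) =
      {.inl ((n * i.val : ℕ) : ZMod (n * k)), .inl ((n * i.val + 1 : ℕ) : ZMod (n * k))} := by
  ext (j | j) <;> simp [starGraph, starAdj]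

theorem isNClique_starTriangle (h3 : (3 : ZMod (n * k)) ≠ 0) (i : ZMod k) :
    (starGraph n k).IsNClique 3 (starTriangle n k i) := by
  have hsucc : ((n * i.val + 1 : ℕ) : ZMod (n * k)) - ((n * i.val : ℕ) : ZMod (n * k)) = 1 := by
    push_cast; ring
  have hne : ((n * i.val : ℕ) : ZMod (n * k)) ≠ ((n * i.val + 1 : ℕ) : ZMod (n * k)) := by
    intro h
    exact h3 (by linear_combination -3 * h - 3 * hsucc)
  exact SimpleGraph.is3Clique_triple_iff.2 ⟨Or.inl rfl, Or.inr rfl, hne, Or.inr hsucc⟩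

theorem exists_inr_mem_of_isNClique (h3 : (3 : ZMod (n * k)) ≠ 0)
    {t : Finset (ZMod (n * k) ⊕ ZMod k)} (ht : (starGraph n k).IsNClique 3 t) :
    ∃ i, .inr i ∈ t := by
  obtain ⟨x, y, z, hxy, hxz, hyz, rfl⟩ := SimpleGraph.is3Clique_iff.1 ht
  rcases x with x | x <;> rcases y with y | y <;> rcases z with z | z
  · exact (h3 (three_eq_zero_of_pairwise_sub_eq_one hxy.2 hyz.2 hxz.2)).elim
  all_goals simp

theorem eq_starTriangle_of_isNClique {t : Finset (ZMod (n * k) ⊕ ZMod k)}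
    (ht : (starGraph n k).IsNClique 3 t) {i : ZMod k} (hi : .inr i ∈ t) :
    t = starTriangle n k i := by
  refine Finset.eq_of_subset_of_card_le (fun x hx => ?_) (ht.card_eq ▸ Finset.card_le_three)
  by_cases hxi : x = .inr i
  · simp [starTriangle, hxi]
  · have hx' : x ∈ (starGraph n k).neighborSet (.inr i) := ht.isClique hi hx (Ne.symm hxi)
    rw [starGraph_neighborSet_inr] at hx'
    simpa [starTriangle] using Or.inr hx'

theorem star_triangles_general (n k : ℕ) (hk : 4 ≤ k) :
    {t : Finset (ZMod (n * k) ⊕ ZMod k) | (starGraph n k).IsNClique 3 t} =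
      {t | ∃ i : ZMod k,
        t = {Sum.inr i, Sum.inl ((n * i.val : ℕ) : ZMod (n * k)),
             Sum.inl ((n * i.val + 1 : ℕ) : ZMod (n * k))}} := by
  have h3 := three_ne_zero_zmod_mul (n := n) hk
  ext t
  constructor
  · intro ht
    obtain ⟨i, hi⟩ := exists_inr_mem_of_isNClique h3 ht
    exact ⟨i, eq_starTriangle_of_isNClique ht hi⟩
  · rintro ⟨i, rfl⟩
    exact isNClique_starTriangle h3 i

/-- For `n ≥ 1` and `k > 3`, the triangles (`3`-cliques) of the star graph
`Star_{n,k}` are exactly the vertex sets `{b_i, a_{n·i}, a_{n·i+1}}`. -/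
theorem star_triangles (n k : ℕ) (hn : 1 ≤ n) (hk : 4 ≤ k) :
    {t : Finset (ZMod (n * k) ⊕ ZMod k) | (starGraph n k).IsNClique 3 t} =
      {t | ∃ i : ZMod k,
        t = {Sum.inr i, Sum.inl ((n * i.val : ℕ) : ZMod (n * k)),
             Sum.inl ((n * i.val + 1 : ℕ) : ZMod (n * k))}} :=
  star_triangles_general n k hk

end TDL
end
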